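/- Fix a model f, a group g with μ(g) > 0, Δ̃ = E[y | g(x)=1] − E[f(x) | g(x)=1], and any real constant c. Let f_c(x) = f(x) + c for g(x)=1 and f_c(x) = f(x) otherwise. Then B(f) − B(f_c) = μ(g)·(2cΔ̃ − c²), and this is maximized over c at c = Δ̃, giving maximum decrease μ(g)·Δ̃². -/

import Mathlib

open scoped Classical
open Finset

noncomputable section

/-- Brier score of a model `f` under a weighted distribution `D` on `X × {0,1}`. -/
def brier {X : Type*} [Fintype X] (D : X → Bool → ℝ) (f : X → ℝ) : ℝ :=
  ∑ x, ∑ y, D x y * (f x - (if y then 1 else 0)) ^ 2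

/-- Mass of a set `S ⊆ X` under the marginal of `D`. -/
def mass {X : Type*} [Fintype X] (D : X → Bool → ℝ) (S : Set X) : ℝ :=
  ∑ x, if x ∈ S then D x true + D x false else 0

/-- Conditional expectation of the label `y` given `x ∈ S`. -/
def condY {X : Type*} [Fintype X] (D : X → Bool → ℝ) (S : Set X) : ℝ :=
  (∑ x, if x ∈ S then D x true else 0) / mass D S

/-- Conditional expectation of `f x` given `x ∈ S`. -/
def condExp {X : Type*} [Fintype X] (D : X → Bool → ℝ) (f : X → ℝ) (S : Set X) : ℝ :=
  (∑ x, if x ∈ S then (D x true + D x false) * f x else 0) / mass D S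

/-!
Shifting the prediction at a point `x` by `c` changes its expected squared loss by
`2c (D x true - w x f x) - c² w x`, where `w x = D x true + D x false`. Summed over the group this
is `μ(g) (2cΔ̃ - c²)`, a concave quadratic in `c` with its vertex at `c = Δ̃`.
-/

section

variable {X : Type*} [Fintype X] {D : X → Bool → ℝ} (f : X → ℝ) (S : Set X) [DecidablePred (· ∈ S)]
  (c : ℝ)

theorem brier_sub_brier_shift_eq_sum :
    brier D f - brier D (fun x => if x ∈ S then f x + c else f x) =
      2 * c * ∑ x, (if x ∈ S then D x true else 0) -
        2 * c * ∑ x, (if x ∈ S then (D x true + D x false) * f x else 0) -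
          c ^ 2 * mass D S := by
  rw [brier, brier, mass, ← sum_sub_distrib, mul_sum, mul_sum, mul_sum, ← sum_sub_distrib,
    ← sum_sub_distrib]
  refine sum_congr rfl fun x _ => ?_
  split_ifs <;> simp only [Fintype.sum_bool, if_true, Bool.false_eq_true, if_false] <;> ring

theorem brier_sub_brier_shift (hS : mass D S ≠ 0) :
    brier D f - brier D (fun x => if x ∈ S then f x + c else f x) =
      mass D S * (2 * c * (condY D S - condExp D f S) - c ^ 2) := by
  have hY : condY D S * mass D S = ∑ x, if x ∈ S then D x true else 0 := by
    rw [condY, div_mul_cancel₀ _ hS]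
    congr!
  have hf : condExp D f S * mass D S =
      ∑ x, if x ∈ S then (D x true + D x false) * f x else 0 := by
    rw [condExp, div_mul_cancel₀ _ hS]
    congr!
  rw [brier_sub_brier_shift_eq_sum, ← hY, ← hf]
  ring

end

theorem constant_patch_identity_general {X : Type*} [Fintype X] (D : X → Bool → ℝ)
    (f : X → ℝ) (g : X → Bool) (hμpos : 0 < mass D {x | g x = true})
    (Δtil : ℝ) (hΔtil : Δtil = condY D {x | g x = true} - condExp D f {x | g x = true})
    (c : ℝ) :
    brier D f - brier D (fun x => if g x then f x + c else f x) =
        mass D {x | g x = true} * (2 * c * Δtil - c ^ 2) ∧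
      brier D f - brier D (fun x => if g x then f x + c else f x) ≤
        mass D {x | g x = true} * Δtil ^ 2 ∧
      brier D f - brier D (fun x => if g x then f x + Δtil else f x) =
        mass D {x | g x = true} * Δtil ^ 2 := by
  have hpatch : ∀ b, brier D f - brier D (fun x => if g x then f x + b else f x) =
      mass D {x | g x = true} * (2 * b * Δtil - b ^ 2) := by
    rw [hΔtil]
    exact fun b => brier_sub_brier_shift f {x | g x = true} b hμpos.ne'
  rw [hpatch, hpatch]
  refine ⟨rfl, ?_, by ring⟩
  exact mul_le_mul_of_nonneg_left (by linarith [two_mul_le_add_sq c Δtil]) hμpos.le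

/-- shifting by a constant `c` on the group `g` changes the Brier score by
`μ(g)(2cΔ̃ − c²)`, which is maximized at `c = Δ̃` with decrease `μ(g)Δ̃²`. -/
theorem constant_patch_identity {X : Type*} [Fintype X] (D : X → Bool → ℝ)
    (hD : ∀ x y, 0 ≤ D x y) (hsum : ∑ x, (D x true + D x false) = 1)
    (f : X → ℝ) (g : X → Bool) (hμpos : 0 < mass D {x | g x = true})
    (Δtil : ℝ) (hΔtil : Δtil = condY D {x | g x = true} - condExp D f {x | g x = true})
    (c : ℝ) :
    brier D f - brier D (fun x => if g x then f x + c else f x) =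
        mass D {x | g x = true} * (2 * c * Δtil - c ^ 2) ∧
      brier D f - brier D (fun x => if g x then f x + c else f x) ≤
        mass D {x | g x = true} * Δtil ^ 2 ∧
      brier D f - brier D (fun x => if g x then f x + Δtil else f x) =
        mass D {x | g x = true} * Δtil ^ 2 :=
  constant_patch_identity_general D f g hμpos Δtil hΔtil c
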